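/- arXiv:1506.04134 — 3 statements merged into one kernel-verified Lean document; each statement's English description precedes it below -/
import Mathlib

section
/- Let Φ be an Orlicz function satisfying the Δ₂-condition, let X̄ = (X₀,X₁) and Ȳ = (Y₀,Y₁) be compatible couples of Banach spaces such that Y₀ and Y₁ are intermediate spaces of X̄, and let 0 ≤ θ₀ < θ₁ ≤ 1. Assume that Yᵢ belongs to the class C_K(θᵢ, X̄) with constant Cᵢ for i = 0,1. Then there exists a constant C, depending only on Φ, θ₀, θ₁, C₀ and C₁, such that for every y ∈ Σ(Ȳ), ∫₀^∞ Φ(t⁻¹ K(t, y; X̄)) dt ≤ C ∫₀^∞ Φ(t^{−1+θ₀} K(t^{θ₁−θ₀}, y; Ȳ)) dt (the inequality holding in [0,∞]). -/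
open MeasureTheory Filter Set

/-- An Orlicz function: continuous, increasing and convex on `[0,∞)`, vanishing at `0`,
and tending to `∞` at `∞`. -/
structure IsOrliczFunction (Φ : ℝ → ℝ) : Prop where
  map_zero : Φ 0 = 0
  continuousOn : ContinuousOn Φ (Set.Ici 0)
  monotoneOn : MonotoneOn Φ (Set.Ici 0)
  convexOn : ConvexOn ℝ (Set.Ici 0) Φ
  tendsto_atTop : Filter.Tendsto Φ Filter.atTop Filter.atTop

/-- The `Δ₂`-condition: `Φ(2t) ≤ C Φ(t)` for all `t ≥ 0` and some constant `C > 0`. -/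
def Delta2 (Φ : ℝ → ℝ) : Prop :=
  ∃ C : ℝ, 0 < C ∧ ∀ t : ℝ, 0 ≤ t → Φ (2 * t) ≤ C * Φ t
section Couple

variable {E : Type*} [AddCommGroup E] [Module ℝ E] [TopologicalSpace E]
variable {X₀ X₁ Z : Type*}
variable [NormedAddCommGroup X₀] [NormedSpace ℝ X₀]
variable [NormedAddCommGroup X₁] [NormedSpace ℝ X₁]
variable [NormedAddCommGroup Z] [NormedSpace ℝ Z]

/-- `x` belongs to the sum `X₀ + X₁` of the couple (embedded in `E` via `i₀, i₁`). -/
def InSigma (i₀ : X₀ →L[ℝ] E) (i₁ : X₁ →L[ℝ] E) (x : E) : Prop :=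
  ∃ a b, x = i₀ a + i₁ b

/-- `x` belongs to the intersection `X₀ ∩ X₁` of the couple. -/
def InDelta (i₀ : X₀ →L[ℝ] E) (i₁ : X₁ →L[ℝ] E) (x : E) : Prop :=
  ∃ a b, i₀ a = x ∧ i₁ b = x

/-- The K-functional of the couple: `K(t,x) = inf {‖a‖ + t‖b‖ : x = a + b}`. -/
noncomputable def Kfun (i₀ : X₀ →L[ℝ] E) (i₁ : X₁ →L[ℝ] E) (t : ℝ) (x : E) : ℝ :=
  sInf {r : ℝ | ∃ a b, x = i₀ a + i₁ b ∧ r = ‖a‖ + t * ‖b‖}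

/-- The J-functional of the couple: `J(t,x) = max (‖x‖_{X₀}, t‖x‖_{X₁})` for `x ∈ Δ`. -/
noncomputable def Jfun (i₀ : X₀ →L[ℝ] E) (i₁ : X₁ →L[ℝ] E) (t : ℝ) (x : E) : ℝ :=
  sInf {r : ℝ | ∃ a b, i₀ a = x ∧ i₁ b = x ∧ r = max ‖a‖ (t * ‖b‖)}

/-- `Z` (embedded in `E` via `j`) is an intermediate space of the couple `(X₀, X₁)`:
the inclusions `Δ ⊆ Z ⊆ Σ` are continuous (`‖·‖_Δ = J(1,·)` and `‖·‖_Σ = K(1,·)`). -/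
def IsIntermediate (i₀ : X₀ →L[ℝ] E) (i₁ : X₁ →L[ℝ] E) (j : Z →L[ℝ] E) : Prop :=
  (∃ c : ℝ, 0 < c ∧ ∀ x : E, InDelta i₀ i₁ x →
      ∃ z : Z, j z = x ∧ ‖z‖ ≤ c * Jfun i₀ i₁ 1 x) ∧
  (∃ c : ℝ, 0 < c ∧ ∀ z : Z, InSigma i₀ i₁ (j z) ∧ Kfun i₀ i₁ 1 (j z) ≤ c * ‖z‖)

/-- `Z` belongs to the class `C_K(θ, (X₀,X₁))` with constant `C`. -/
def ClassCK (i₀ : X₀ →L[ℝ] E) (i₁ : X₁ →L[ℝ] E) (j : Z →L[ℝ] E) (θ C : ℝ) : Prop :=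
  ∀ z : Z, ∀ t : ℝ, 0 < t → Kfun i₀ i₁ t (j z) ≤ C * t ^ θ * ‖z‖

/-- `Z` belongs to the class `C_J(θ, (X₀,X₁))` with constant `C`. -/
def ClassCJ (i₀ : X₀ →L[ℝ] E) (i₁ : X₁ →L[ℝ] E) (j : Z →L[ℝ] E) (θ C : ℝ) : Prop :=
  ∀ z : Z, InDelta i₀ i₁ (j z) → ∀ t : ℝ, 0 < t →
    ‖z‖ ≤ C * t ^ (-θ) * Jfun i₀ i₁ t (j z)

end Couple

/-!
Write `y = j₀ a + j₁ b` with `a ∈ Y₀`, `b ∈ Y₁`. Subadditivity of the K-functional and the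
`C_K` estimates give `K(t,y;X̄) ≤ C t^θ₀ ‖a‖ + C t^θ₁ ‖b‖ = C t^θ₀ (‖a‖ + t^(θ₁-θ₀) ‖b‖)`, and
taking the infimum over all such splittings, `t⁻¹ K(t,y;X̄) ≤ C t^(θ₀-1) K(t^(θ₁-θ₀),y;Ȳ)`.
Since `Φ` is increasing and satisfies `Δ₂`, `Φ(C s) ≤ D Φ(s)`, so the integrands compare pointwise.
-/

namespace Delta2

variable {Φ : ℝ → ℝ}

lemma map_two_pow_mul_le {C : ℝ} (hC : 0 ≤ C) (h : ∀ t : ℝ, 0 ≤ t → Φ (2 * t) ≤ C * Φ t)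
    (k : ℕ) {u : ℝ} (hu : 0 ≤ u) : Φ (2 ^ k * u) ≤ C ^ k * Φ u := by
  induction k with
  | zero => simp
  | succ n ih =>
    calc Φ (2 ^ (n + 1) * u) = Φ (2 * (2 ^ n * u)) := by ring_nf
      _ ≤ C * Φ (2 ^ n * u) := h (2 ^ n * u) (by positivity)
      _ ≤ C * (C ^ n * Φ u) := mul_le_mul_of_nonneg_left ih hC
      _ = C ^ (n + 1) * Φ u := by ring

lemma exists_le_mul_of_le_mul (hΔ : Delta2 Φ) (hmono : MonotoneOn Φ (Ici 0)) (M : ℝ) :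
    ∃ D : ℝ, 0 < D ∧ ∀ x u : ℝ, 0 ≤ x → 0 ≤ u → x ≤ M * u → Φ x ≤ D * Φ u := by
  obtain ⟨C, hC, h⟩ := hΔ
  obtain ⟨k, hk⟩ : ∃ k : ℕ, M < 2 ^ k := pow_unbounded_of_one_lt M one_lt_two
  refine ⟨C ^ k, pow_pos hC k, fun x u hx hu hxu => ?_⟩
  calc Φ x ≤ Φ (2 ^ k * u) :=
        hmono hx (mem_Ici.2 (by positivity)) (hxu.trans (mul_le_mul_of_nonneg_right hk.le hu))
    _ ≤ C ^ k * Φ u := map_two_pow_mul_le hC.le h k hu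

end Delta2

section Couple

variable {E : Type*} [AddCommGroup E] [Module ℝ E] [TopologicalSpace E]
variable {X₀ X₁ Z : Type*}
variable [NormedAddCommGroup X₀] [NormedSpace ℝ X₀]
variable [NormedAddCommGroup X₁] [NormedSpace ℝ X₁]
variable [NormedAddCommGroup Z] [NormedSpace ℝ Z]
variable {i₀ : X₀ →L[ℝ] E} {i₁ : X₁ →L[ℝ] E} {t : ℝ} {x : E}

lemma Kfun_nonneg (ht : 0 ≤ t) : 0 ≤ Kfun i₀ i₁ t x :=
  Real.sInf_nonneg (by rintro r ⟨a, b, -, rfl⟩; positivity)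

lemma Kfun_le (ht : 0 ≤ t) {a : X₀} {b : X₁} (hx : x = i₀ a + i₁ b) :
    Kfun i₀ i₁ t x ≤ ‖a‖ + t * ‖b‖ :=
  csInf_le ⟨0, by rintro r ⟨a, b, -, rfl⟩; positivity⟩ ⟨a, b, hx, rfl⟩

lemma le_Kfun (hx : InSigma i₀ i₁ x) {r : ℝ}
    (h : ∀ a b, x = i₀ a + i₁ b → r ≤ ‖a‖ + t * ‖b‖) : r ≤ Kfun i₀ i₁ t x := by
  obtain ⟨a, b, hab⟩ := hx
  exact le_csInf ⟨_, a, b, hab, rfl⟩ (by rintro _ ⟨a, b, hab, rfl⟩; exact h a b hab)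

lemma Kfun_add_le {y : E} (hx : InSigma i₀ i₁ x) (hy : InSigma i₀ i₁ y) (ht : 0 ≤ t) :
    Kfun i₀ i₁ t (x + y) ≤ Kfun i₀ i₁ t x + Kfun i₀ i₁ t y := by
  have h : ∀ a b, x = i₀ a + i₁ b →
      Kfun i₀ i₁ t (x + y) - (‖a‖ + t * ‖b‖) ≤ Kfun i₀ i₁ t y := by
    rintro a b rfl
    refine le_Kfun hy fun a' b' hy' => ?_
    have hsplit : i₀ a + i₁ b + y = i₀ (a + a') + i₁ (b + b') := by
      rw [hy', map_add, map_add]; abel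
    linarith [Kfun_le ht hsplit, norm_add_le a a', mul_le_mul_of_nonneg_left (norm_add_le b b') ht]
  exact sub_le_iff_le_add.1 (le_Kfun hx fun a b hab => sub_le_comm.1 (h a b hab))

lemma IsIntermediate.inSigma {j : Z →L[ℝ] E} (h : IsIntermediate i₀ i₁ j) (z : Z) :
    InSigma i₀ i₁ (j z) :=
  let ⟨_, _, hK⟩ := h.2
  (hK z).1

lemma ClassCK.mono {j : Z →L[ℝ] E} {θ C C' : ℝ} (h : ClassCK i₀ i₁ j θ C) (hC : C ≤ C') :
    ClassCK i₀ i₁ j θ C' := fun z t ht =>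
  (h z t ht).trans <| mul_le_mul_of_nonneg_right
    (mul_le_mul_of_nonneg_right hC (Real.rpow_nonneg ht.le θ)) (norm_nonneg z)

lemma Kfun_le_mul_rpow_mul_Kfun {Y₀ Y₁ : Type*}
    [NormedAddCommGroup Y₀] [NormedSpace ℝ Y₀] [NormedAddCommGroup Y₁] [NormedSpace ℝ Y₁]
    {j₀ : Y₀ →L[ℝ] E} {j₁ : Y₁ →L[ℝ] E} {θ₀ θ₁ C : ℝ}
    (hj₀ : ∀ z, InSigma i₀ i₁ (j₀ z)) (hj₁ : ∀ z, InSigma i₀ i₁ (j₁ z)) (hC : 0 < C)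
    (hCK₀ : ClassCK i₀ i₁ j₀ θ₀ C) (hCK₁ : ClassCK i₀ i₁ j₁ θ₁ C) {y : E}
    (hy : InSigma j₀ j₁ y) (ht : 0 < t) :
    Kfun i₀ i₁ t y ≤ C * t ^ θ₀ * Kfun j₀ j₁ (t ^ (θ₁ - θ₀)) y := by
  have hc : 0 < C * t ^ θ₀ := by positivity
  rw [← div_le_iff₀' hc]
  refine le_Kfun hy ?_
  rintro a b rfl
  rw [div_le_iff₀' hc]
  calc Kfun i₀ i₁ t (j₀ a + j₁ b) ≤ Kfun i₀ i₁ t (j₀ a) + Kfun i₀ i₁ t (j₁ b) :=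
        Kfun_add_le (hj₀ a) (hj₁ b) ht.le
    _ ≤ C * t ^ θ₀ * ‖a‖ + C * t ^ θ₁ * ‖b‖ := add_le_add (hCK₀ a t ht) (hCK₁ b t ht)
    _ = C * t ^ θ₀ * (‖a‖ + t ^ (θ₁ - θ₀) * ‖b‖) := by
        rw [show θ₁ = θ₀ + (θ₁ - θ₀) by ring, Real.rpow_add ht, add_sub_cancel_left]; ring

end Couple

theorem statement0_general (Φ : ℝ → ℝ) (hΦ : IsOrliczFunction Φ) (hΔ₂ : Delta2 Φ)
    (θ₀ θ₁ C₀ C₁ : ℝ) :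
    ∃ C : ℝ, 0 < C ∧
      ∀ (E : Type*) [AddCommGroup E] [Module ℝ E] [TopologicalSpace E] [T2Space E]
        (X₀ X₁ Y₀ Y₁ : Type*)
        [NormedAddCommGroup X₀] [NormedSpace ℝ X₀] [CompleteSpace X₀]
        [NormedAddCommGroup X₁] [NormedSpace ℝ X₁] [CompleteSpace X₁]
        [NormedAddCommGroup Y₀] [NormedSpace ℝ Y₀] [CompleteSpace Y₀]
        [NormedAddCommGroup Y₁] [NormedSpace ℝ Y₁] [CompleteSpace Y₁]
        (i₀ : X₀ →L[ℝ] E) (i₁ : X₁ →L[ℝ] E) (j₀ : Y₀ →L[ℝ] E) (j₁ : Y₁ →L[ℝ] E),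
        Function.Injective ⇑i₀ → Function.Injective ⇑i₁ →
        Function.Injective ⇑j₀ → Function.Injective ⇑j₁ →
        IsIntermediate i₀ i₁ j₀ → IsIntermediate i₀ i₁ j₁ →
        ClassCK i₀ i₁ j₀ θ₀ C₀ → ClassCK i₀ i₁ j₁ θ₁ C₁ →
        ∀ y : E, InSigma j₀ j₁ y →
          (∫⁻ t in Set.Ioi (0:ℝ), ENNReal.ofReal (Φ (t⁻¹ * Kfun i₀ i₁ t y))) ≤
            ENNReal.ofReal C *
              ∫⁻ t in Set.Ioi (0:ℝ),
                ENNReal.ofReal (Φ (t ^ (θ₀ - 1) * Kfun j₀ j₁ (t ^ (θ₁ - θ₀)) y)) := by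
  set M := max (max C₀ C₁) 1
  obtain ⟨D, hD, hΦD⟩ := hΔ₂.exists_le_mul_of_le_mul hΦ.monotoneOn M
  refine ⟨D, hD, ?_⟩
  intro E _ _ _ _ X₀ X₁ Y₀ Y₁ _ _ _ _ _ _ _ _ _ _ _ _ i₀ i₁ j₀ j₁ _ _ _ _
    hInt₀ hInt₁ hCK₀ hCK₁ y hy
  have hM : 0 < M := lt_max_of_lt_right one_pos
  rw [← lintegral_const_mul' _ _ ENNReal.ofReal_ne_top]
  refine setLIntegral_mono' measurableSet_Ioi fun t (ht : 0 < t) => ?_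
  have hK := Kfun_le_mul_rpow_mul_Kfun hInt₀.inSigma hInt₁.inSigma hM
    (hCK₀.mono (le_max_of_le_left (le_max_left _ _)))
    (hCK₁.mono (le_max_of_le_left (le_max_right _ _))) hy ht
  rw [← ENNReal.ofReal_mul hD.le]
  refine ENNReal.ofReal_le_ofReal (hΦD _ _ ?_ ?_ ?_)
  · exact mul_nonneg (inv_nonneg.2 ht.le) (Kfun_nonneg ht.le)
  · exact mul_nonneg (Real.rpow_nonneg ht.le _) (Kfun_nonneg (Real.rpow_nonneg ht.le _))
  · calc t⁻¹ * Kfun i₀ i₁ t y ≤ t⁻¹ * (M * t ^ θ₀ * Kfun j₀ j₁ (t ^ (θ₁ - θ₀)) y) :=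
          mul_le_mul_of_nonneg_left hK (inv_nonneg.2 ht.le)
      _ = M * (t ^ (θ₀ - 1) * Kfun j₀ j₁ (t ^ (θ₁ - θ₀)) y) := by
          rw [Real.rpow_sub_one ht.ne']; field_simp

/-- Φ-moment comparison of K-functionals under `C_K` class hypotheses. -/
theorem statement0 (Φ : ℝ → ℝ) (hΦ : IsOrliczFunction Φ) (hΔ₂ : Delta2 Φ)
    (θ₀ θ₁ C₀ C₁ : ℝ) (hθ₀ : 0 ≤ θ₀) (hθ₀₁ : θ₀ < θ₁) (hθ₁ : θ₁ ≤ 1) :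
    ∃ C : ℝ, 0 < C ∧
      ∀ (E : Type*) [AddCommGroup E] [Module ℝ E] [TopologicalSpace E] [T2Space E]
        (X₀ X₁ Y₀ Y₁ : Type*)
        [NormedAddCommGroup X₀] [NormedSpace ℝ X₀] [CompleteSpace X₀]
        [NormedAddCommGroup X₁] [NormedSpace ℝ X₁] [CompleteSpace X₁]
        [NormedAddCommGroup Y₀] [NormedSpace ℝ Y₀] [CompleteSpace Y₀]
        [NormedAddCommGroup Y₁] [NormedSpace ℝ Y₁] [CompleteSpace Y₁]
        (i₀ : X₀ →L[ℝ] E) (i₁ : X₁ →L[ℝ] E) (j₀ : Y₀ →L[ℝ] E) (j₁ : Y₁ →L[ℝ] E),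
        Function.Injective ⇑i₀ → Function.Injective ⇑i₁ →
        Function.Injective ⇑j₀ → Function.Injective ⇑j₁ →
        IsIntermediate i₀ i₁ j₀ → IsIntermediate i₀ i₁ j₁ →
        ClassCK i₀ i₁ j₀ θ₀ C₀ → ClassCK i₀ i₁ j₁ θ₁ C₁ →
        ∀ y : E, InSigma j₀ j₁ y →
          (∫⁻ t in Set.Ioi (0:ℝ), ENNReal.ofReal (Φ (t⁻¹ * Kfun i₀ i₁ t y))) ≤
            ENNReal.ofReal C *
              ∫⁻ t in Set.Ioi (0:ℝ),
                ENNReal.ofReal (Φ (t ^ (θ₀ - 1) * Kfun j₀ j₁ (t ^ (θ₁ - θ₀)) y)) :=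
  statement0_general Φ hΦ hΔ₂ θ₀ θ₁ C₀ C₁
end

section
/- Let Φ be an Orlicz function satisfying the Δ₂-condition, let X̄ = (X₀,X₁) and Ȳ = (Y₀,Y₁) be compatible couples of Banach spaces such that Y₀ and Y₁ are intermediate spaces of X̄, and let 0 ≤ θ₀ < θ₁ ≤ 1. Assume that Yᵢ belongs to the class C_J(θᵢ, X̄) with constant Cᵢ for i = 0,1. Let y ∈ Δ(Ȳ) and let u : (0,∞) → Δ(X̄) be a representation of y with respect to the couple X̄ which is also a representation of y with respect to the couple Ȳ (in particular u(t) ∈ Δ(X̄) ∩ Δ(Ȳ) for all t > 0). Then there exists a constant C, depending only on Φ, θ₀, θ₁, C₀ and C₁, such that ∫₀^∞ Φ(t^{−1+θ₀} J(t^{θ₁−θ₀}, u(t); Ȳ)) dt ≤ C ∫₀^∞ Φ(t⁻¹ J(t, u(t); X̄)) dt (the inequality holding in [0,∞]). -/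
open MeasureTheory Filter Set

/-- `u : (0,∞) → Δ(X̄)` is a representation of `y` with respect to the couple `(X₀,X₁)`:
`u` is strongly measurable with values in `Δ`, and `y = ∫₀^∞ u(t) dt/t` with the improper
integral converging in `Σ(X̄)` (whose norm is `K(1,·)`). -/
structure IsRepresentation
    {E X₀ X₁ : Type*} [AddCommGroup E] [Module ℝ E] [TopologicalSpace E]
    [NormedAddCommGroup X₀] [NormedSpace ℝ X₀]
    [NormedAddCommGroup X₁] [NormedSpace ℝ X₁]
    (i₀ : X₀ →L[ℝ] E) (i₁ : X₁ →L[ℝ] E) (y : E) (u : ℝ → E) : Prop where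
  mem_delta : ∀ t : ℝ, 0 < t → InDelta i₀ i₁ (u t)
  meas₁ : ∃ u₁ : ℝ → X₁, (∀ t : ℝ, 0 < t → i₁ (u₁ t) = u t) ∧
    MeasureTheory.AEStronglyMeasurable u₁ (MeasureTheory.volume.restrict (Set.Ioi 0))
  repr₀ : ∃ u₀ : ℝ → X₀,
    (∀ t : ℝ, 0 < t → i₀ (u₀ t) = u t) ∧
    MeasureTheory.AEStronglyMeasurable u₀ (MeasureTheory.volume.restrict (Set.Ioi 0)) ∧
    (∀ a b : ℝ, 0 < a → IntervalIntegrable (fun t => t⁻¹ • u₀ t) MeasureTheory.volume a b) ∧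
    (∀ a b : ℝ, 0 < a → InSigma i₀ i₁ (y - i₀ (∫ t in a..b, t⁻¹ • u₀ t))) ∧
    Filter.Tendsto
      (fun ab : ℝ × ℝ => Kfun i₀ i₁ 1 (y - i₀ (∫ t in ab.1..ab.2, t⁻¹ • u₀ t)))
      ((nhdsWithin (0:ℝ) (Set.Ioi 0)) ×ˢ (Filter.atTop : Filter ℝ)) (nhds 0)

/-!
The inequality holds pointwise in `t`. Writing `u t` as `z₀ ∈ Y₀` and `z₁ ∈ Y₁`, the `C_J`
estimates give `‖z₀‖ ≤ C₀ t^{-θ₀} J(t, u t; X̄)` and `t^{θ₁-θ₀} ‖z₁‖ ≤ C₁ t^{-θ₀} J(t, u t; X̄)`,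
hence `t^{θ₀-1} J(t^{θ₁-θ₀}, u t; Ȳ) ≤ max C₀ C₁ · t⁻¹ J(t, u t; X̄)`. Since `Φ` is increasing
and satisfies `Δ₂`, enlarging its argument by a fixed factor enlarges `Φ` by at most a fixed
factor, and integrating gives the claim.
-/

section Couple

variable {E X₀ X₁ : Type*} [AddCommGroup E] [Module ℝ E] [TopologicalSpace E]
  [NormedAddCommGroup X₀] [NormedSpace ℝ X₀] [NormedAddCommGroup X₁] [NormedSpace ℝ X₁]
  {i₀ : X₀ →L[ℝ] E} {i₁ : X₁ →L[ℝ] E}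

theorem Jfun_nonneg (t : ℝ) (x : E) : 0 ≤ Jfun i₀ i₁ t x :=
  Real.sInf_nonneg fun _ ⟨a, _, _, _, hr⟩ ↦ hr ▸ (norm_nonneg a).trans (le_max_left _ _)

theorem Jfun_eq_max_of_injective (h₀ : Function.Injective i₀) (h₁ : Function.Injective i₁)
    {x : E} {a : X₀} {b : X₁} (ha : i₀ a = x) (hb : i₁ b = x) (t : ℝ) :
    Jfun i₀ i₁ t x = max ‖a‖ (t * ‖b‖) := by
  have hset : {r : ℝ | ∃ a' b', i₀ a' = x ∧ i₁ b' = x ∧ r = max ‖a'‖ (t * ‖b'‖)} =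
      {max ‖a‖ (t * ‖b‖)} := by
    ext r
    constructor
    · rintro ⟨a', b', ha', hb', rfl⟩
      rw [h₀ (ha'.trans ha.symm), h₁ (hb'.trans hb.symm), Set.mem_singleton_iff]
    · rintro rfl
      exact ⟨a, b, ha, hb, rfl⟩
  rw [Jfun, hset, csInf_singleton]

variable {Y₀ Y₁ : Type*} [NormedAddCommGroup Y₀] [NormedSpace ℝ Y₀]
  [NormedAddCommGroup Y₁] [NormedSpace ℝ Y₁] {j₀ : Y₀ →L[ℝ] E} {j₁ : Y₁ →L[ℝ] E}

theorem Jfun_le_of_classCJ (hj₀ : Function.Injective j₀) (hj₁ : Function.Injective j₁)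
    {θ₀ θ₁ C₀ C₁ : ℝ} (hCJ₀ : ClassCJ i₀ i₁ j₀ θ₀ C₀) (hCJ₁ : ClassCJ i₀ i₁ j₁ θ₁ C₁)
    {x : E} (hxX : InDelta i₀ i₁ x) (hxY : InDelta j₀ j₁ x) {t : ℝ} (ht : 0 < t) :
    Jfun j₀ j₁ (t ^ (θ₁ - θ₀)) x ≤ max C₀ C₁ * t ^ (-θ₀) * Jfun i₀ i₁ t x := by
  obtain ⟨z₀, z₁, rfl, hz₁⟩ := hxY
  have hJ : 0 ≤ t ^ (-θ₀) * Jfun i₀ i₁ t (j₀ z₀) :=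
    mul_nonneg (Real.rpow_nonneg ht.le _) (Jfun_nonneg _ _)
  have hz₀_le : ‖z₀‖ ≤ C₀ * t ^ (-θ₀) * Jfun i₀ i₁ t (j₀ z₀) := hCJ₀ z₀ hxX t ht
  have hz₁_le : t ^ (θ₁ - θ₀) * ‖z₁‖ ≤ C₁ * t ^ (-θ₀) * Jfun i₀ i₁ t (j₀ z₀) := by
    have h := hCJ₁ z₁ (hz₁ ▸ hxX) t ht
    rw [hz₁] at h
    calc t ^ (θ₁ - θ₀) * ‖z₁‖
        ≤ t ^ (θ₁ - θ₀) * (C₁ * t ^ (-θ₁) * Jfun i₀ i₁ t (j₀ z₀)) :=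
          mul_le_mul_of_nonneg_left h (Real.rpow_nonneg ht.le _)
      _ = C₁ * (t ^ (θ₁ - θ₀) * t ^ (-θ₁)) * Jfun i₀ i₁ t (j₀ z₀) := by ring
      _ = C₁ * t ^ (-θ₀) * Jfun i₀ i₁ t (j₀ z₀) := by
          rw [← Real.rpow_add ht]; ring_nf
  rw [Jfun_eq_max_of_injective hj₀ hj₁ rfl hz₁, mul_assoc]
  rw [mul_assoc] at hz₀_le hz₁_le
  exact max_le (hz₀_le.trans (by gcongr; exact le_max_left _ _))
    (hz₁_le.trans (by gcongr; exact le_max_right _ _))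

theorem rpow_mul_Jfun_le_of_classCJ (hj₀ : Function.Injective j₀)
    (hj₁ : Function.Injective j₁) {θ₀ θ₁ C₀ C₁ : ℝ} (hCJ₀ : ClassCJ i₀ i₁ j₀ θ₀ C₀)
    (hCJ₁ : ClassCJ i₀ i₁ j₁ θ₁ C₁) {x : E} (hxX : InDelta i₀ i₁ x) (hxY : InDelta j₀ j₁ x)
    {t : ℝ} (ht : 0 < t) :
    t ^ (θ₀ - 1) * Jfun j₀ j₁ (t ^ (θ₁ - θ₀)) x ≤ max C₀ C₁ * (t⁻¹ * Jfun i₀ i₁ t x) := by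
  have hexp : t ^ (θ₀ - 1) * t ^ (-θ₀) = t⁻¹ := by
    rw [← Real.rpow_add ht, show θ₀ - 1 + -θ₀ = -1 by ring, Real.rpow_neg_one]
  calc t ^ (θ₀ - 1) * Jfun j₀ j₁ (t ^ (θ₁ - θ₀)) x
      ≤ t ^ (θ₀ - 1) * (max C₀ C₁ * t ^ (-θ₀) * Jfun i₀ i₁ t x) :=
        mul_le_mul_of_nonneg_left (Jfun_le_of_classCJ hj₀ hj₁ hCJ₀ hCJ₁ hxX hxY ht)
          (Real.rpow_nonneg ht.le _)
    _ = max C₀ C₁ * ((t ^ (θ₀ - 1) * t ^ (-θ₀)) * Jfun i₀ i₁ t x) := by ring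
    _ = max C₀ C₁ * (t⁻¹ * Jfun i₀ i₁ t x) := by rw [hexp]

end Couple

theorem le_pow_mul_of_le_mul_two {Φ : ℝ → ℝ} {c : ℝ} (hc : 0 ≤ c)
    (h : ∀ t : ℝ, 0 ≤ t → Φ (2 * t) ≤ c * Φ t) (k : ℕ) {s : ℝ} (hs : 0 ≤ s) :
    Φ (2 ^ k * s) ≤ c ^ k * Φ s := by
  induction k with
  | zero => simp
  | succ k ih =>
    calc Φ (2 ^ (k + 1) * s) = Φ (2 * (2 ^ k * s)) := by ring_nf
      _ ≤ c * Φ (2 ^ k * s) := h _ (by positivity)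
      _ ≤ c * (c ^ k * Φ s) := mul_le_mul_of_nonneg_left ih hc
      _ = c ^ (k + 1) * Φ s := by ring

theorem Delta2.exists_le_mul_of_le_mul_s2 {Φ : ℝ → ℝ} (hΦ : MonotoneOn Φ (Set.Ici 0))
    (hΔ₂ : Delta2 Φ) (M : ℝ) :
    ∃ C : ℝ, 0 < C ∧ ∀ r s : ℝ, 0 ≤ r → 0 ≤ s → r ≤ M * s → Φ r ≤ C * Φ s := by
  obtain ⟨c, hc, hΦ2⟩ := hΔ₂
  obtain ⟨k, hk⟩ := pow_unbounded_of_one_lt M (one_lt_two (α := ℝ))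
  refine ⟨c ^ k, pow_pos hc k, fun r s hr hs hrs ↦ ?_⟩
  have hr_le : r ≤ 2 ^ k * s := hrs.trans (mul_le_mul_of_nonneg_right hk.le hs)
  exact (hΦ hr (hr.trans hr_le) hr_le).trans (le_pow_mul_of_le_mul_two hc.le hΦ2 k hs)

theorem statement2_general (Φ : ℝ → ℝ) (hΦ : IsOrliczFunction Φ) (hΔ₂ : Delta2 Φ)
    (θ₀ θ₁ C₀ C₁ : ℝ) :
    ∃ C : ℝ, 0 < C ∧
      ∀ (E : Type*) [AddCommGroup E] [Module ℝ E] [TopologicalSpace E] [T2Space E]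
        (X₀ X₁ Y₀ Y₁ : Type*)
        [NormedAddCommGroup X₀] [NormedSpace ℝ X₀] [CompleteSpace X₀]
        [NormedAddCommGroup X₁] [NormedSpace ℝ X₁] [CompleteSpace X₁]
        [NormedAddCommGroup Y₀] [NormedSpace ℝ Y₀] [CompleteSpace Y₀]
        [NormedAddCommGroup Y₁] [NormedSpace ℝ Y₁] [CompleteSpace Y₁]
        (i₀ : X₀ →L[ℝ] E) (i₁ : X₁ →L[ℝ] E) (j₀ : Y₀ →L[ℝ] E) (j₁ : Y₁ →L[ℝ] E),
        Function.Injective ⇑i₀ → Function.Injective ⇑i₁ →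
        Function.Injective ⇑j₀ → Function.Injective ⇑j₁ →
        IsIntermediate i₀ i₁ j₀ → IsIntermediate i₀ i₁ j₁ →
        ClassCJ i₀ i₁ j₀ θ₀ C₀ → ClassCJ i₀ i₁ j₁ θ₁ C₁ →
        ∀ (y : E) (u : ℝ → E), InDelta j₀ j₁ y →
          IsRepresentation i₀ i₁ y u → IsRepresentation j₀ j₁ y u →
          (∫⁻ t in Set.Ioi (0:ℝ),
              ENNReal.ofReal (Φ (t ^ (θ₀ - 1) * Jfun j₀ j₁ (t ^ (θ₁ - θ₀)) (u t)))) ≤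
            ENNReal.ofReal C *
              ∫⁻ t in Set.Ioi (0:ℝ), ENNReal.ofReal (Φ (t⁻¹ * Jfun i₀ i₁ t (u t))) := by
  obtain ⟨C, hC, hΦC⟩ := hΔ₂.exists_le_mul_of_le_mul_s2 hΦ.monotoneOn (max C₀ C₁)
  refine ⟨C, hC, ?_⟩
  intro E _ _ _ _ X₀ X₁ Y₀ Y₁ _ _ _ _ _ _ _ _ _ _ _ _ i₀ i₁ j₀ j₁ _ _ hj₀ hj₁ _ _
    hCJ₀ hCJ₁ y u _ hrepX hrepY
  have pointwise : ∀ t ∈ Set.Ioi (0 : ℝ),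
      ENNReal.ofReal (Φ (t ^ (θ₀ - 1) * Jfun j₀ j₁ (t ^ (θ₁ - θ₀)) (u t))) ≤
        ENNReal.ofReal C * ENNReal.ofReal (Φ (t⁻¹ * Jfun i₀ i₁ t (u t))) := by
    intro t (ht : 0 < t)
    have hscaled := rpow_mul_Jfun_le_of_classCJ hj₀ hj₁ hCJ₀ hCJ₁ (hrepX.mem_delta t ht)
      (hrepY.mem_delta t ht) ht
    rw [← ENNReal.ofReal_mul hC.le]
    exact ENNReal.ofReal_le_ofReal <| hΦC _ _
      (mul_nonneg (Real.rpow_nonneg ht.le _) (Jfun_nonneg _ _))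
      (mul_nonneg (inv_nonneg.2 ht.le) (Jfun_nonneg _ _)) hscaled
  calc (∫⁻ t in Set.Ioi (0 : ℝ),
        ENNReal.ofReal (Φ (t ^ (θ₀ - 1) * Jfun j₀ j₁ (t ^ (θ₁ - θ₀)) (u t))))
      ≤ ∫⁻ t in Set.Ioi (0 : ℝ),
          ENNReal.ofReal C * ENNReal.ofReal (Φ (t⁻¹ * Jfun i₀ i₁ t (u t))) :=
        setLIntegral_mono_ae' measurableSet_Ioi (Eventually.of_forall pointwise)
    _ = ENNReal.ofReal C *
          ∫⁻ t in Set.Ioi (0 : ℝ), ENNReal.ofReal (Φ (t⁻¹ * Jfun i₀ i₁ t (u t))) :=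
        lintegral_const_mul' _ _ ENNReal.ofReal_ne_top

/-- Φ-moment comparison of J-functionals under `C_J` class hypotheses,
along a common representation `u` of `y ∈ Δ(Ȳ)` for both couples. -/
theorem statement2 (Φ : ℝ → ℝ) (hΦ : IsOrliczFunction Φ) (hΔ₂ : Delta2 Φ)
    (θ₀ θ₁ C₀ C₁ : ℝ) (hθ₀ : 0 ≤ θ₀) (hθ₀₁ : θ₀ < θ₁) (hθ₁ : θ₁ ≤ 1) :
    ∃ C : ℝ, 0 < C ∧
      ∀ (E : Type*) [AddCommGroup E] [Module ℝ E] [TopologicalSpace E] [T2Space E]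
        (X₀ X₁ Y₀ Y₁ : Type*)
        [NormedAddCommGroup X₀] [NormedSpace ℝ X₀] [CompleteSpace X₀]
        [NormedAddCommGroup X₁] [NormedSpace ℝ X₁] [CompleteSpace X₁]
        [NormedAddCommGroup Y₀] [NormedSpace ℝ Y₀] [CompleteSpace Y₀]
        [NormedAddCommGroup Y₁] [NormedSpace ℝ Y₁] [CompleteSpace Y₁]
        (i₀ : X₀ →L[ℝ] E) (i₁ : X₁ →L[ℝ] E) (j₀ : Y₀ →L[ℝ] E) (j₁ : Y₁ →L[ℝ] E),
        Function.Injective ⇑i₀ → Function.Injective ⇑i₁ →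
        Function.Injective ⇑j₀ → Function.Injective ⇑j₁ →
        IsIntermediate i₀ i₁ j₀ → IsIntermediate i₀ i₁ j₁ →
        ClassCJ i₀ i₁ j₀ θ₀ C₀ → ClassCJ i₀ i₁ j₁ θ₁ C₁ →
        ∀ (y : E) (u : ℝ → E), InDelta j₀ j₁ y →
          IsRepresentation i₀ i₁ y u → IsRepresentation j₀ j₁ y u →
          (∫⁻ t in Set.Ioi (0:ℝ),
              ENNReal.ofReal (Φ (t ^ (θ₀ - 1) * Jfun j₀ j₁ (t ^ (θ₁ - θ₀)) (u t)))) ≤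
            ENNReal.ofReal C *
              ∫⁻ t in Set.Ioi (0:ℝ), ENNReal.ofReal (Φ (t⁻¹ * Jfun i₀ i₁ t (u t))) :=
  statement2_general Φ hΦ hΔ₂ θ₀ θ₁ C₀ C₁
end

section
/- Let Φ be an Orlicz function whose Matuzewska–Orlicz indices satisfy 1 ≤ p < p_Φ ≤ q_Φ < ∞ for some real p. Then there exists a constant C, depending only on Φ and p, such that for every measurable function f on (0,∞) with ∫₀^∞ Φ(|f(t)|) dt < ∞, one has ∫₀^∞ Φ(|S_{p,∞}f(t)|) dt ≤ C ∫₀^∞ Φ(|f(t)|) dt. -/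
/-!
Write `S_{p,∞} f(t) = ∫₀¹ x^{1/p-1} f(tx) dx`, pick `p < r < p_Φ` and put `a = 1/p - 1/r > 0`.
The splitting `x^{1/p-1} = (a x^{a-1}) · (a⁻¹ x^{1/r})` exhibits `S_{p,∞} f(t)` as an average
against the probability measure `a x^{a-1} dx` on `(0, 1]`, so by Jensen's inequality
`Φ(|S_{p,∞} f(t)|) ≤ ∫₀¹ Φ(a⁻¹ x^{1/r} |f(tx)|) a x^{a-1} dx`.
As `r` lies below the lower index, `M(t,Φ) ≤ K t^r` for `0 < t ≤ a⁻¹`, whence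
`Φ(a⁻¹ x^{1/r} s) ≤ K a^{-r} x Φ(s)`. Integrating in `t` and using the dilation identity
`∫₀^∞ Φ(|f(tx)|) dt = x⁻¹ ∫₀^∞ Φ(|f|)`, the factors `x` and `x⁻¹` cancel and `C = K a^{-r}`.
-/

open MeasureTheory Filter Set

/-- `M(t,Φ) = sup_{s>0} Φ(ts)/Φ(s)`. -/
noncomputable def orliczM (Φ : ℝ → ℝ) (t : ℝ) : ℝ :=
  sSup {r : ℝ | ∃ s : ℝ, 0 < s ∧ r = Φ (t * s) / Φ s}

/-- `p` and `q` are the Matuzewska–Orlicz indices of `Φ`: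
`p = lim_{t→0⁺} log M(t,Φ)/log t` and `q = lim_{t→∞} log M(t,Φ)/log t`. -/
def HasMatuzewskaOrliczIndices (Φ : ℝ → ℝ) (p q : ℝ) : Prop :=
  Filter.Tendsto (fun t : ℝ => Real.log (orliczM Φ t) / Real.log t)
      (nhdsWithin 0 (Set.Ioi 0)) (nhds p) ∧
  Filter.Tendsto (fun t : ℝ => Real.log (orliczM Φ t) / Real.log t)
      Filter.atTop (nhds q)

/-- The Calderón operator `S_{p,∞} f(t) = t^{-1/p} ∫₀^t s^{1/p} f(s) ds/s`. -/
noncomputable def Spinf (p : ℝ) (f : ℝ → ℝ) (t : ℝ) : ℝ :=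
  t ^ (-(1/p)) * ∫ s in (0:ℝ)..t, s ^ (1/p) * f s / s

-- `orliczM Φ t` unfolds to `sSup (orliczRatios Φ t)`.
def orliczRatios (Φ : ℝ → ℝ) (t : ℝ) : Set ℝ :=
  {r : ℝ | ∃ s : ℝ, 0 < s ∧ r = Φ (t * s) / Φ s}

lemma eventually_orliczM_le_rpow {Φ : ℝ → ℝ} {p r : ℝ}
    (hp : Tendsto (fun t ↦ Real.log (orliczM Φ t) / Real.log t) (nhdsWithin 0 (Ioi 0))
      (nhds p)) (hr : r < p) :
    ∀ᶠ t in nhdsWithin 0 (Ioi 0), orliczM Φ t ≤ t ^ r := by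
  filter_upwards [hp.eventually (eventually_gt_nhds hr), self_mem_nhdsWithin,
    nhdsWithin_le_nhds (eventually_lt_nhds one_pos)] with t hlog (ht0 : 0 < t) ht1
  rcases le_or_gt (orliczM Φ t) 0 with hM | hM
  · exact hM.trans (Real.rpow_nonneg ht0.le r)
  · rw [lt_div_iff_of_neg (Real.log_neg ht0 ht1)] at hlog
    exact (Real.le_rpow_iff_log_le hM ht0).2 hlog.le

namespace IsOrliczFunction

variable {Φ : ℝ → ℝ}

lemma nonneg (hΦ : IsOrliczFunction Φ) {s : ℝ} (hs : 0 ≤ s) : 0 ≤ Φ s :=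
  hΦ.map_zero ▸ hΦ.monotoneOn self_mem_Ici hs hs

lemma map_mul_le_mul (hΦ : IsOrliczFunction Φ) {t s : ℝ} (ht₀ : 0 ≤ t) (ht₁ : t ≤ 1)
    (hs : 0 ≤ s) : Φ (t * s) ≤ t * Φ s := by
  simpa [hΦ.map_zero] using
    hΦ.convexOn.2 (mem_Ici.2 hs) self_mem_Ici ht₀ (sub_nonneg.2 ht₁) (by ring)

lemma continuous_comp_abs (hΦ : IsOrliczFunction Φ) : Continuous fun x ↦ Φ |x| :=
  hΦ.continuousOn.comp_continuous continuous_abs abs_nonneg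

lemma le_one_add_div (hΦ : IsOrliczFunction Φ) (hΦ1 : 0 < Φ 1) {x : ℝ} (hx : 0 ≤ x) :
    x ≤ 1 + Φ x / Φ 1 := by
  rcases le_or_gt x 1 with hx1 | hx1
  · linarith [div_nonneg (hΦ.nonneg hx) hΦ1.le]
  · have hx0 : 0 < x := one_pos.trans hx1
    have h : Φ 1 ≤ x⁻¹ * Φ x := by
      simpa [inv_mul_cancel₀ hx0.ne'] using
        hΦ.map_mul_le_mul (inv_nonneg.2 hx0.le) (inv_le_one_of_one_le₀ hx1.le) hx
    rw [le_inv_mul_iff₀ hx0] at h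
    have : x ≤ Φ x / Φ 1 := by rw [le_div_iff₀ hΦ1]; linarith
    linarith

lemma ofReal_map_integral_le_lintegral (hΦ : IsOrliczFunction Φ) (hΦ1 : 0 < Φ 1)
    {α : Type*} [MeasurableSpace α] {μ : Measure α} [IsProbabilityMeasure μ] {g : α → ℝ}
    (hg : AEStronglyMeasurable g μ) (hg0 : ∀ᵐ x ∂μ, 0 ≤ g x) :
    ENNReal.ofReal (Φ (∫ x, g x ∂μ)) ≤ ∫⁻ x, ENNReal.ofReal (Φ (g x)) ∂μ := by
  rcases eq_top_or_lt_top (∫⁻ x, ENNReal.ofReal (Φ (g x)) ∂μ) with h | hfin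
  · simp [h]
  have hΦg0 : 0 ≤ᵐ[μ] fun x ↦ Φ (g x) := hg0.mono fun x hx ↦ hΦ.nonneg hx
  have hΦg : Integrable (fun x ↦ Φ (g x)) μ := by
    refine ⟨(hΦ.continuous_comp_abs.comp_aestronglyMeasurable hg).congr ?_, ?_⟩
    · filter_upwards [hg0] with x hx using by simp [abs_of_nonneg hx]
    · rwa [hasFiniteIntegral_iff_ofReal hΦg0]
  have hgi : Integrable g μ := by
    refine ((integrable_const 1).add (hΦg.div_const (Φ 1))).mono' hg ?_
    filter_upwards [hg0] with x hx
    simpa [abs_of_nonneg hx] using hΦ.le_one_add_div hΦ1 hx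
  rw [← ofReal_integral_eq_lintegral_ofReal hΦg hΦg0]
  exact ENNReal.ofReal_le_ofReal <|
    hΦ.convexOn.map_integral_le hΦ.continuousOn isClosed_Ici hg0 hgi hΦg

lemma map_mul_div_le_map_mul_div (hΦ : IsOrliczFunction Φ) {t t' s : ℝ} (ht : 0 ≤ t) (htt' : t ≤ t')
    (hs : 0 ≤ s) : Φ (t * s) / Φ s ≤ Φ (t' * s) / Φ s :=
  div_le_div_of_nonneg_right
    (hΦ.monotoneOn (mem_Ici.2 (by positivity)) (mem_Ici.2 (by nlinarith)) (by nlinarith))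
    (hΦ.nonneg hs)

/-- `Real.sSup` of an unbounded set is `0`, so an unbounded ratio set at `t` would make
`orliczM Φ` vanish on `[t, ∞)` and force the upper index to be `0`. -/
lemma bddAbove_orliczRatios (hΦ : IsOrliczFunction Φ) {q : ℝ}
    (hq : Tendsto (fun t ↦ Real.log (orliczM Φ t) / Real.log t) atTop (nhds q)) (hq0 : q ≠ 0)
    {t : ℝ} (ht : 0 < t) : BddAbove (orliczRatios Φ t) := by
  by_contra hunb
  have hM : ∀ t' ≥ t, orliczM Φ t' = 0 := by
    refine fun t' ht' ↦ Real.sSup_of_not_bddAbove fun ⟨R, hR⟩ ↦ hunb ⟨R, ?_⟩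
    rintro _ ⟨s, hs, rfl⟩
    exact (hΦ.map_mul_div_le_map_mul_div ht.le ht' hs.le).trans (hR ⟨s, hs, rfl⟩)
  refine hq0 (tendsto_nhds_unique hq (tendsto_const_nhds.congr' ?_))
  filter_upwards [eventually_ge_atTop t] with t' ht'
  simp [hM t' ht']

lemma pos_of_bddAbove_orliczRatios (hΦ : IsOrliczFunction Φ)
    (hbdd : ∀ t > 0, BddAbove (orliczRatios Φ t))
    {s : ℝ} (hs : 0 < s) : 0 < Φ s := by
  refine (hΦ.nonneg hs.le).lt_of_ne fun hΦs ↦ ?_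
  obtain ⟨x, hΦx, hsx⟩ := ((hΦ.tendsto_atTop.eventually_ge_atTop 1).and
    (eventually_ge_atTop s)).exists
  obtain ⟨R, hR⟩ := hbdd (x / s) (div_pos (hs.trans_le hsx) hs)
  -- `Φ` takes the small value `ε` somewhere on `[s, x]`, where `Φ ((x / s) ·) ≥ Φ x ≥ 1`.
  set ε := 1 / (|R| + 1)
  have hε : ε ∈ Icc (Φ s) (Φ x) :=
    ⟨hΦs ▸ by positivity, (div_le_one (by positivity)).2 (by linarith [abs_nonneg R]) |>.trans hΦx⟩
  obtain ⟨y, ⟨hsy, hyx⟩, hΦy⟩ := intermediate_value_Icc hsx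
    (hΦ.continuousOn.mono fun z hz ↦ mem_Ici.2 (hs.le.trans hz.1)) hε
  have hxy : x ≤ x / s * y := by
    rw [div_mul_eq_mul_div, le_div_iff₀ hs]; nlinarith
  have h1 : 1 ≤ Φ (x / s * y) :=
    hΦx.trans (hΦ.monotoneOn (mem_Ici.2 (by linarith)) (mem_Ici.2 (by linarith)) hxy)
  have h2 : Φ (x / s * y) / Φ y ≤ R := hR ⟨y, by linarith, rfl⟩
  rw [hΦy, div_le_iff₀ (by positivity)] at h2
  have : R * ε < 1 := by
    rw [mul_one_div, div_lt_one (by positivity)]; linarith [le_abs_self R]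
  linarith

lemma map_mul_le_orliczM_mul (hΦ : IsOrliczFunction Φ)
    (hbdd : ∀ t > 0, BddAbove (orliczRatios Φ t)) {t s : ℝ} (ht : 0 < t) (hs : 0 ≤ s) :
    Φ (t * s) ≤ orliczM Φ t * Φ s := by
  rcases hs.eq_or_lt with rfl | hs
  · simp [hΦ.map_zero]
  exact (div_le_iff₀ (hΦ.pos_of_bddAbove_orliczRatios hbdd hs)).1
    (le_csSup (hbdd t ht) ⟨s, hs, rfl⟩)

lemma orliczM_mono (hΦ : IsOrliczFunction Φ)
    (hbdd : ∀ t > 0, BddAbove (orliczRatios Φ t)) {t t' : ℝ} (ht : 0 < t) (htt' : t ≤ t') :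
    orliczM Φ t ≤ orliczM Φ t' := by
  refine csSup_le ⟨_, 1, one_pos, rfl⟩ ?_
  rintro _ ⟨s, hs, rfl⟩
  exact (hΦ.map_mul_div_le_map_mul_div ht.le htt' hs.le).trans
    (le_csSup (hbdd t' (ht.trans_le htt')) ⟨s, hs, rfl⟩)

lemma exists_orliczM_le_mul_rpow (hΦ : IsOrliczFunction Φ)
    (hbdd : ∀ t > 0, BddAbove (orliczRatios Φ t)) {p r c : ℝ}
    (hp : Tendsto (fun t ↦ Real.log (orliczM Φ t) / Real.log t) (nhdsWithin 0 (Ioi 0))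
      (nhds p)) (hr0 : 0 ≤ r) (hr : r < p) :
    ∃ K > 0, ∀ t, 0 < t → t ≤ c → orliczM Φ t ≤ K * t ^ r := by
  obtain ⟨t₀, ht₀, hsmall⟩ := mem_nhdsGT_iff_exists_Ioc_subset.1
    (eventually_orliczM_le_rpow hp hr)
  have ht₀r : 0 < t₀ ^ r := Real.rpow_pos_of_pos ht₀ r
  refine ⟨max 1 (orliczM Φ c / t₀ ^ r), by positivity, fun t ht htc ↦ ?_⟩
  rcases le_or_gt t t₀ with htt₀ | htt₀
  · calc orliczM Φ t ≤ t ^ r := hsmall ⟨ht, htt₀⟩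
      _ ≤ _ := le_mul_of_one_le_left (by positivity) (le_max_left _ _)
  · calc orliczM Φ t ≤ orliczM Φ c := hΦ.orliczM_mono hbdd ht htc
      _ = orliczM Φ c / t₀ ^ r * t₀ ^ r := by field_simp
      _ ≤ max 1 (orliczM Φ c / t₀ ^ r) * t ^ r := by
        gcongr ?_ * ?_
        · exact le_max_right _ _
        · exact Real.rpow_le_rpow ht₀.le htt₀.le hr0

lemma exists_map_mul_le_mul_rpow (hΦ : IsOrliczFunction Φ)
    (hbdd : ∀ t > 0, BddAbove (orliczRatios Φ t)) {p r c : ℝ}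
    (hp : Tendsto (fun t ↦ Real.log (orliczM Φ t) / Real.log t) (nhdsWithin 0 (Ioi 0))
      (nhds p)) (hr0 : 0 ≤ r) (hr : r < p) :
    ∃ K > 0, ∀ t, 0 < t → t ≤ c → ∀ s, 0 ≤ s → Φ (t * s) ≤ K * t ^ r * Φ s := by
  obtain ⟨K, hK, hMK⟩ := hΦ.exists_orliczM_le_mul_rpow hbdd (c := c) hp hr0 hr
  exact ⟨K, hK, fun t ht htc s hs ↦ (hΦ.map_mul_le_orliczM_mul hbdd ht hs).trans
    (mul_le_mul_of_nonneg_right (hMK t ht htc) (hΦ.nonneg hs))⟩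

end IsOrliczFunction

lemma Spinf_eq_integral_comp_mul (p : ℝ) (f : ℝ → ℝ) {t : ℝ} (ht : 0 < t) :
    Spinf p f t = ∫ x in (0:ℝ)..1, x ^ (1 / p - 1) * f (t * x) := by
  have hsub := intervalIntegral.integral_comp_mul_left
    (fun s ↦ s ^ (1 / p) * f s / s) ht.ne' (a := 0) (b := 1)
  rw [mul_zero, mul_one, smul_eq_mul, eq_inv_mul_iff_mul_eq₀ ht.ne'] at hsub
  rw [Spinf, ← hsub, ← mul_assoc, ← intervalIntegral.integral_const_mul]
  refine intervalIntegral.integral_congr_ae (.of_forall fun x hx ↦ ?_)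
  rw [uIoc_of_le zero_le_one] at hx
  rw [Real.mul_rpow ht.le hx.1.le, Real.rpow_sub_one hx.1.ne', Real.rpow_neg ht.le]
  field_simp

noncomputable def powMeasure (a : ℝ) : Measure ℝ :=
  (volume.restrict (Ioc 0 1)).withDensity fun u ↦ ENNReal.ofReal (a * u ^ (a - 1))

lemma ae_powMeasure_mem (a : ℝ) : ∀ᵐ u ∂powMeasure a, u ∈ Ioc (0:ℝ) 1 :=
  withDensity_absolutelyContinuous _ _ (ae_restrict_mem measurableSet_Ioc)

lemma isProbabilityMeasure_powMeasure {a : ℝ} (ha : 0 < a) :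
    IsProbabilityMeasure (powMeasure a) := by
  have hint : IntervalIntegrable (fun u : ℝ ↦ a * u ^ (a - 1)) volume 0 1 :=
    (intervalIntegral.intervalIntegrable_rpow' (by linarith)).const_mul a
  have hmass : ∫ u in (0:ℝ)..1, a * u ^ (a - 1) = 1 := by
    rw [intervalIntegral.integral_const_mul, integral_rpow (.inl (by linarith)), sub_add_cancel,
      Real.one_rpow, Real.zero_rpow ha.ne', sub_zero]
    field_simp
  constructor
  rw [powMeasure, withDensity_apply _ .univ, Measure.restrict_univ,
    ← ofReal_integral_eq_lintegral_ofReal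
      ((intervalIntegrable_iff_integrableOn_Ioc_of_le zero_le_one).1 hint)
      (ae_restrict_of_forall_mem measurableSet_Ioc fun u hu ↦ by have := hu.1; positivity),
    ← intervalIntegral.integral_of_le zero_le_one, hmass, ENNReal.ofReal_one]

lemma integral_powMeasure {a : ℝ} (ha : 0 ≤ a) (g : ℝ → ℝ) :
    ∫ u, g u ∂powMeasure a = ∫ u in Ioc 0 1, a * u ^ (a - 1) * g u := by
  rw [powMeasure, integral_withDensity_eq_integral_toReal_smul (by fun_prop)
    (.of_forall fun _ ↦ ENNReal.ofReal_lt_top)]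
  refine setIntegral_congr_fun measurableSet_Ioc fun u hu ↦ ?_
  rw [ENNReal.toReal_ofReal (by have := hu.1; positivity), smul_eq_mul]

lemma lintegral_Ioi_comp_mul_right {g : ℝ → ENNReal} (hg : Measurable g) {u : ℝ} (hu : 0 < u) :
    ∫⁻ t in Ioi 0, g (t * u) = ENNReal.ofReal u⁻¹ * ∫⁻ t in Ioi 0, g t := by
  have hpre : (fun t : ℝ ↦ t * u) ⁻¹' Ioi 0 = Ioi 0 := by
    ext t; simp [mul_pos_iff_of_pos_right hu]
  conv_lhs => rw [← hpre]
  rw [← lintegral_map hg (measurable_mul_const u),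
    ← Measure.restrict_map (measurable_mul_const u) measurableSet_Ioi,
    Real.map_volume_mul_right hu.ne', abs_of_pos (inv_pos.2 hu), Measure.restrict_smul,
    lintegral_smul_measure, smul_eq_mul]

lemma lintegral_Ioi_lintegral_ofReal_mul_comp_mul {ν : Measure ℝ} [SFinite ν]
    (hν : ∀ᵐ u ∂ν, 0 < u) {g : ℝ → ENNReal} (hg : Measurable g) :
    ∫⁻ t in Ioi 0, ∫⁻ u, ENNReal.ofReal u * g (t * u) ∂ν = ν univ * ∫⁻ t in Ioi 0, g t := by
  rw [lintegral_lintegral_swap (by fun_prop), mul_comm, ← lintegral_const]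
  refine lintegral_congr_ae (hν.mono fun u hu ↦ ?_)
  dsimp only
  rw [lintegral_const_mul _ (by fun_prop),
    lintegral_Ioi_comp_mul_right hg hu, ← mul_assoc, ← ENNReal.ofReal_mul hu.le,
    mul_inv_cancel₀ hu.ne', ENNReal.ofReal_one, one_mul]

lemma abs_Spinf_le_integral_powMeasure {p r : ℝ} (ha : 0 < 1 / p - 1 / r) (f : ℝ → ℝ) {t : ℝ}
    (ht : 0 < t) :
    |Spinf p f t| ≤
      ∫ u, (1 / p - 1 / r)⁻¹ * u ^ (1 / r) * |f (t * u)| ∂powMeasure (1 / p - 1 / r) := by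
  rw [Spinf_eq_integral_comp_mul p f ht, integral_powMeasure ha.le,
    ← intervalIntegral.integral_of_le zero_le_one]
  refine (intervalIntegral.abs_integral_le_integral_abs zero_le_one).trans_eq
    (intervalIntegral.integral_congr_ae (.of_forall fun u hu ↦ ?_))
  rw [uIoc_of_le zero_le_one] at hu
  have hsplit : u ^ (1 / p - 1) = u ^ (1 / p - 1 / r - 1) * u ^ (1 / r) := by
    rw [← Real.rpow_add hu.1]; ring_nf
  rw [abs_mul, abs_of_nonneg (Real.rpow_nonneg hu.1.le _), hsplit]
  field_simp

namespace IsOrliczFunction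

variable {Φ : ℝ → ℝ}

lemma ofReal_map_abs_Spinf_le (hΦ : IsOrliczFunction Φ) (hΦ1 : 0 < Φ 1) {p r K : ℝ}
    (ha : 0 < 1 / p - 1 / r) (hr : 0 < r)
    (hK : ∀ t, 0 < t → t ≤ (1 / p - 1 / r)⁻¹ → ∀ s, 0 ≤ s → Φ (t * s) ≤ K * t ^ r * Φ s)
    {f : ℝ → ℝ} (hf : Measurable f) {t : ℝ} (ht : 0 < t) :
    ENNReal.ofReal (Φ |Spinf p f t|) ≤ ENNReal.ofReal (K * (1 / p - 1 / r)⁻¹ ^ r) *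
      ∫⁻ u, ENNReal.ofReal u * ENNReal.ofReal (Φ |f (t * u)|) ∂powMeasure (1 / p - 1 / r) := by
  set a := 1 / p - 1 / r
  have := isProbabilityMeasure_powMeasure ha
  set G : ℝ → ℝ := fun u ↦ a⁻¹ * u ^ (1 / r) * |f (t * u)|
  have hG0 : ∀ᵐ u ∂powMeasure a, 0 ≤ G u :=
    (ae_powMeasure_mem a).mono fun u hu ↦ by have := hu.1; positivity
  have hΦG : ∀ u ∈ Ioc (0:ℝ) 1, Φ (G u) ≤ K * a⁻¹ ^ r * u * Φ |f (t * u)| := by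
    intro u hu
    have hscale : a⁻¹ * u ^ (1 / r) ≤ a⁻¹ :=
      mul_le_of_le_one_right (by positivity) (Real.rpow_le_one hu.1.le hu.2 (by positivity))
    calc Φ (G u) ≤ K * (a⁻¹ * u ^ (1 / r)) ^ r * Φ |f (t * u)| :=
          hK _ (by have := hu.1; positivity) hscale _ (abs_nonneg _)
      _ = K * a⁻¹ ^ r * u * Φ |f (t * u)| := by
          rw [Real.mul_rpow (by positivity) (by have := hu.1; positivity),
            ← Real.rpow_mul hu.1.le, one_div_mul_cancel hr.ne', Real.rpow_one]
          ring
  calc ENNReal.ofReal (Φ |Spinf p f t|) ≤ ENNReal.ofReal (Φ (∫ u, G u ∂powMeasure a)) := by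
        have hS := abs_Spinf_le_integral_powMeasure ha f ht
        exact ENNReal.ofReal_le_ofReal <| hΦ.monotoneOn (mem_Ici.2 (abs_nonneg _))
          (mem_Ici.2 ((abs_nonneg _).trans hS)) hS
    _ ≤ ∫⁻ u, ENNReal.ofReal (Φ (G u)) ∂powMeasure a :=
        hΦ.ofReal_map_integral_le_lintegral hΦ1 (by fun_prop) hG0
    _ ≤ ∫⁻ u, ENNReal.ofReal (K * a⁻¹ ^ r) *
          (ENNReal.ofReal u * ENNReal.ofReal (Φ |f (t * u)|)) ∂powMeasure a := by
        refine lintegral_mono_ae ((ae_powMeasure_mem a).mono fun u hu ↦ ?_)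
        rw [← ENNReal.ofReal_mul hu.1.le, ← ENNReal.ofReal_mul'
          (mul_nonneg hu.1.le (hΦ.nonneg (abs_nonneg _))), ← mul_assoc]
        exact ENNReal.ofReal_le_ofReal (hΦG u hu)
    _ = _ := lintegral_const_mul' _ _ ENNReal.ofReal_ne_top

lemma lintegral_map_abs_Spinf_le (hΦ : IsOrliczFunction Φ) (hΦ1 : 0 < Φ 1) {p r K : ℝ}
    (ha : 0 < 1 / p - 1 / r) (hr : 0 < r)
    (hK : ∀ t, 0 < t → t ≤ (1 / p - 1 / r)⁻¹ → ∀ s, 0 ≤ s → Φ (t * s) ≤ K * t ^ r * Φ s)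
    {f : ℝ → ℝ} (hf : Measurable f) :
    ∫⁻ t in Ioi 0, ENNReal.ofReal (Φ |Spinf p f t|) ≤
      ENNReal.ofReal (K * (1 / p - 1 / r)⁻¹ ^ r) * ∫⁻ t in Ioi 0, ENNReal.ofReal (Φ |f t|) := by
  have := isProbabilityMeasure_powMeasure ha
  calc ∫⁻ t in Ioi 0, ENNReal.ofReal (Φ |Spinf p f t|)
      ≤ ∫⁻ t in Ioi 0, ENNReal.ofReal (K * (1 / p - 1 / r)⁻¹ ^ r) *
          ∫⁻ u, ENNReal.ofReal u * ENNReal.ofReal (Φ |f (t * u)|) ∂powMeasure (1 / p - 1 / r) :=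
        setLIntegral_mono' measurableSet_Ioi fun t ht ↦
          hΦ.ofReal_map_abs_Spinf_le hΦ1 ha hr hK hf ht
    _ = _ := by
        rw [lintegral_const_mul' _ _ ENNReal.ofReal_ne_top,
          lintegral_Ioi_lintegral_ofReal_mul_comp_mul (g := fun s ↦ ENNReal.ofReal (Φ |f s|))
            ((ae_powMeasure_mem _).mono fun u hu ↦ hu.1)
            (hΦ.continuous_comp_abs.measurable.comp hf).ennreal_ofReal,
          measure_univ, one_mul]

end IsOrliczFunction

/-- Φ-moment boundedness of the Calderón operator `S_{p,∞}`
when `1 ≤ p < p_Φ ≤ q_Φ < ∞`. -/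
theorem statement4 (Φ : ℝ → ℝ) (hΦ : IsOrliczFunction Φ) (pΦ qΦ : ℝ)
    (hMO : HasMatuzewskaOrliczIndices Φ pΦ qΦ) (p : ℝ)
    (hp : 1 ≤ p) (hppΦ : p < pΦ) (hpΦqΦ : pΦ ≤ qΦ) :
    ∃ C : ℝ, 0 < C ∧ ∀ f : ℝ → ℝ, Measurable f →
      (∫⁻ t in Set.Ioi (0:ℝ), ENNReal.ofReal (Φ |f t|)) < ⊤ →
      (∫⁻ t in Set.Ioi (0:ℝ), ENNReal.ofReal (Φ |Spinf p f t|)) ≤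
        ENNReal.ofReal C * ∫⁻ t in Set.Ioi (0:ℝ), ENNReal.ofReal (Φ |f t|) := by
  obtain ⟨hlower, hupper⟩ := hMO
  obtain ⟨r, hpr, hrpΦ⟩ := exists_between hppΦ
  have hr : 0 < r := by linarith
  have ha : 0 < 1 / p - 1 / r := sub_pos.2 (one_div_lt_one_div_of_lt (by linarith) hpr)
  have hbdd := fun t (ht : 0 < t) ↦ hΦ.bddAbove_orliczRatios hupper (by linarith) ht
  obtain ⟨K, hK, hΦK⟩ := hΦ.exists_map_mul_le_mul_rpow hbdd hlower hr.le hrpΦ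
  exact ⟨K * (1 / p - 1 / r)⁻¹ ^ r, by positivity, fun f hf _ ↦
    hΦ.lintegral_map_abs_Spinf_le (hΦ.pos_of_bddAbove_orliczRatios hbdd one_pos) ha hr hΦK hf⟩
end
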